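/- arXiv:2310.11550 — 6 statements merged into one kernel-verified Lean document; each statement's English description precedes it below -/
import Mathlib

section
/- Let n ≥ 1, let Ω be a nonempty compact convex set of symmetric positive definite n×n real matrices, let H₀ ∈ Ω, let B be a symmetric n×n real matrix, and let m > 0 satisfy √(Tr(H₀ B H₀ B)) ≤ m. Then for every η with 0 < η ≤ 1/(16m) and every H ∈ Ω, it holds that ⟨H₀ − H, −B⟩ − D_F(H, H₀)/η ≤ 8η · Tr(H₀ B H₀ B). -/
open scoped BigOperators Matrix

/-- The Bregman divergence associated with the log-determinant barrier
`F(X) = -log det X`, namely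
`D_F(A, B) = -log det A + log det B + Tr(B⁻¹ (A - B))`. -/
noncomputable def logDetBreg {n : Type*} [Fintype n] [DecidableEq n]
    (A B : Matrix n n ℝ) : ℝ :=
  -Real.log A.det + Real.log B.det + (B⁻¹ * (A - B)).trace

/-!
Write `H₀ = S Sᵀ` with `S` invertible and put `X = S⁻¹ H S⁻ᵀ`, `M = Sᵀ B S`. Then the linear term is
`⟨X - 1, M⟩`, `Tr (Mᵀ M) = Tr (H₀ B H₀ B)`, and by congruence invariance of the log-det Bregman
divergence `D_F(H, H₀) = D_F(X, 1) = ∑ (λᵢ - 1 - log λᵢ)` over the eigenvalues `λᵢ` of `X`.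
Cauchy–Schwarz bounds the linear term by `‖λ - 1‖₂ · √Tr (Mᵀ M)`, and the scalar inequality
`(x - 1)² ≤ 2 (x + 1) (x - 1 - log x)` (from `log √x ≤ √x - 1`) controls `‖λ - 1‖₂²` by
`(4 + 2 ‖λ - 1‖₂)` times the divergence, which leaves a one-variable quadratic estimate.
-/

namespace Real

theorem sq_sub_one_le_mul_sub_one_sub_log {x : ℝ} (hx : 0 < x) :
    (x - 1) ^ 2 ≤ 2 * (x + 1) * (x - 1 - log x) := by
  have hlog : log √x ≤ √x - 1 := log_le_sub_one_of_pos (sqrt_pos.mpr hx)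
  rw [log_sqrt hx.le] at hlog
  have hsq : √x ^ 2 = x := sq_sqrt hx.le
  have hfactor : (x - 1) ^ 2 = (√x - 1) ^ 2 * (√x + 1) ^ 2 := by nlinarith
  have hbound : (√x + 1) ^ 2 ≤ 2 * (x + 1) := by nlinarith [sq_nonneg (√x - 1)]
  nlinarith [sq_nonneg (√x - 1), sq_nonneg (√x + 1)]

theorem mul_sub_div_le_of_sq_le {s c Φ η : ℝ} (hs : 0 ≤ s) (hc : 0 ≤ c) (hη : 0 < η)
    (hηc : η * c ≤ 1 / 16) (hsΦ : s ^ 2 ≤ (4 + 2 * s) * Φ) :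
    s * c - Φ / η ≤ 8 * η * c ^ 2 := by
  set a := η * c
  have ha : 0 ≤ a := by positivity
  have hquad : (s * a - 8 * a ^ 2) * (4 + 2 * s) ≤ s ^ 2 := by
    nlinarith [sq_nonneg (s - 4 * a), mul_nonneg hs ha,
      mul_nonneg (mul_nonneg hs hs) (sub_nonneg.2 hηc), mul_nonneg (mul_nonneg hs ha) ha]
  have : s * a - 8 * a ^ 2 ≤ Φ :=
    le_of_mul_le_mul_right (by linarith) (by positivity : (0 : ℝ) < 4 + 2 * s)
  rw [sub_le_iff_le_add, ← sub_le_iff_le_add', le_div_iff₀ hη]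
  linarith

theorem sqrt_sum_sq_sub_one_mul_sub_le {ι : Type*} [Fintype ι] {x : ι → ℝ} (hx : ∀ i, 0 < x i)
    {c η : ℝ} (hc : 0 ≤ c) (hη : 0 < η) (hηc : η * c ≤ 1 / 16) :
    √(∑ i, (x i - 1) ^ 2) * c - (∑ i, (x i - 1 - log (x i))) / η ≤ 8 * η * c ^ 2 := by
  set s := √(∑ i, (x i - 1) ^ 2)
  have hs : s ^ 2 = ∑ i, (x i - 1) ^ 2 := sq_sqrt (Finset.sum_nonneg fun i _ => sq_nonneg _)
  refine mul_sub_div_le_of_sq_le (sqrt_nonneg _) hc hη hηc ?_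
  rw [hs, Finset.mul_sum]
  refine Finset.sum_le_sum fun i _ => (sq_sub_one_le_mul_sub_one_sub_log (hx i)).trans ?_
  have hxs : x i - 1 ≤ s := le_sqrt_of_sq_le (Finset.single_le_sum (f := fun j => (x j - 1) ^ 2)
    (fun j _ => sq_nonneg _) (Finset.mem_univ i))
  have hφ : 0 ≤ x i - 1 - log (x i) := by linarith [log_le_sub_one_of_pos (hx i)]
  gcongr
  linarith

end Real

namespace Matrix
variable {ι : Type*} [Fintype ι]

theorem trace_transpose_mul_le (P Q : Matrix ι ι ℝ) :
    (Pᵀ * Q).trace ≤ √(Pᵀ * P).trace * √(Qᵀ * Q).trace := by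
  simp only [← vec_dotProduct_vec, dotProduct, ← sq]
  exact Real.sum_mul_le_sqrt_mul_sqrt _ _ _

theorem trace_transpose_mul_self_nonneg (P : Matrix ι ι ℝ) : 0 ≤ (Pᵀ * P).trace := by
  rw [← vec_dotProduct_vec]
  exact Finset.sum_nonneg fun i _ => mul_self_nonneg _

variable [DecidableEq ι]

theorem IsHermitian.trace_mul_self {A : Matrix ι ι ℝ} (hA : A.IsHermitian) :
    (A * A).trace = ∑ i, hA.eigenvalues i ^ 2 := by
  conv_lhs => rw [hA.spectral_theorem, ← map_mul, Unitary.conjStarAlgAut_apply, trace_mul_cycle,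
    Unitary.coe_star_mul_self, one_mul, diagonal_mul_diagonal]
  simp [trace_diagonal, sq]

theorem IsHermitian.trace_transpose_sub_one_mul_sub_one {A : Matrix ι ι ℝ} (hA : A.IsHermitian) :
    ((A - 1)ᵀ * (A - 1)).trace = ∑ i, (hA.eigenvalues i - 1) ^ 2 := by
  have hAt : Aᵀ = A := (isHermitian_iff_isSymm.mp hA).eq
  have : (A - 1)ᵀ * (A - 1) = A * A - 2 • A + 1 := by
    rw [transpose_sub, hAt, transpose_one]; noncomm_ring
  rw [this, trace_add, trace_sub, trace_smul, hA.trace_mul_self, hA.trace_eq_sum_eigenvalues,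
    trace_one]
  simp [sub_sq, Finset.sum_add_distrib, Finset.sum_sub_distrib, Finset.mul_sum, Finset.card_univ]

theorem PosDef.logDetBreg_one {X : Matrix ι ι ℝ} (hX : X.PosDef) :
    logDetBreg X 1 = ∑ i, (hX.1.eigenvalues i - 1 - Real.log (hX.1.eigenvalues i)) := by
  rw [logDetBreg, inv_one, one_mul, trace_sub, hX.1.trace_eq_sum_eigenvalues, det_one,
    Real.log_one, hX.1.det_eq_prod_eigenvalues]
  simp only [RCLike.ofReal_real_eq_id, id, Real.log_prod fun i _ => (hX.eigenvalues_pos i).ne',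
    Finset.sum_sub_distrib, trace_one, Finset.card_univ, Finset.sum_const, nsmul_eq_mul, mul_one]
  ring

theorem logDetBreg_conj {A B C : Matrix ι ι ℝ} (hC : IsUnit C) (hA : A.det ≠ 0)
    (hB : B.det ≠ 0) : logDetBreg (C * A * Cᵀ) (C * B * Cᵀ) = logDetBreg A B := by
  have hdC : IsUnit C.det := (isUnit_iff_isUnit_det C).mp hC
  have htr : ((C * B * Cᵀ)⁻¹ * (C * A * Cᵀ - C * B * Cᵀ)).trace = (B⁻¹ * (A - B)).trace := by
    rw [← sub_mul, ← mul_sub, mul_inv_rev, mul_inv_rev, trace_mul_cycle]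
    simp only [mul_assoc, mul_nonsing_inv Cᵀ (by simpa using hdC), mul_one]
    rw [trace_mul_comm, mul_assoc, mul_assoc, nonsing_inv_mul C hdC, mul_one, trace_mul_comm]
  simp only [logDetBreg, det_mul, det_transpose, Real.log_mul, hdC.ne_zero, hA, hB, ne_eq,
    mul_eq_zero, or_self, not_false_eq_true, htr]
  ring

open scoped MatrixOrder in
theorem PosDef.exists_isUnit_eq_mul_transpose {A : Matrix ι ι ℝ} (hA : A.PosDef) :
    ∃ S : Matrix ι ι ℝ, IsUnit S ∧ A = S * Sᵀ := by
  have hS : (CFC.sqrt A)ᵀ = CFC.sqrt A := (nonneg_iff_posSemidef.mp (CFC.sqrt_nonneg A)).1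
  refine ⟨CFC.sqrt A, ?_, ?_⟩
  · exact (CFC.isUnit_sqrt_iff A hA.posSemidef.nonneg).mpr hA.isUnit
  · rw [hS, CFC.sqrt_mul_sqrt_self A hA.posSemidef.nonneg]

theorem PosDef.trace_transpose_sub_one_mul_sub_logDetBreg_one_le {X M : Matrix ι ι ℝ}
    (hX : X.PosDef) {η : ℝ} (hη : 0 < η) (hηM : η * √(Mᵀ * M).trace ≤ 1 / 16) :
    ((X - 1)ᵀ * M).trace - logDetBreg X 1 / η ≤ 8 * η * (Mᵀ * M).trace := by
  calc ((X - 1)ᵀ * M).trace - logDetBreg X 1 / η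
      ≤ √(∑ i, (hX.1.eigenvalues i - 1) ^ 2) * √(Mᵀ * M).trace
        - (∑ i, (hX.1.eigenvalues i - 1 - Real.log (hX.1.eigenvalues i))) / η := by
        rw [hX.logDetBreg_one, ← hX.1.trace_transpose_sub_one_mul_sub_one]
        gcongr
        exact trace_transpose_mul_le _ _
    _ ≤ 8 * η * √(Mᵀ * M).trace ^ 2 :=
        Real.sqrt_sum_sq_sub_one_mul_sub_le hX.eigenvalues_pos (Real.sqrt_nonneg _) hη hηM
    _ = 8 * η * (Mᵀ * M).trace := by rw [Real.sq_sqrt (trace_transpose_mul_self_nonneg M)]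

theorem PosDef.trace_transpose_sub_mul_neg_sub_logDetBreg_le {H₀ H B : Matrix ι ι ℝ}
    (hH₀ : H₀.PosDef) (hH : H.PosDef) (hB : B.IsSymm) {η : ℝ} (hη : 0 < η)
    (hηB : η * √(H₀ * B * H₀ * B).trace ≤ 1 / 16) :
    ((H₀ - H)ᵀ * (-B)).trace - logDetBreg H H₀ / η ≤ 8 * η * (H₀ * B * H₀ * B).trace := by
  obtain ⟨S, hS, rfl⟩ := hH₀.exists_isUnit_eq_mul_transpose
  have hSdet : IsUnit S.det := (isUnit_iff_isUnit_det S).mp hS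
  set X := S⁻¹ * H * S⁻¹ᵀ
  have hX : X.PosDef := by
    simpa using hH.mul_mul_conjTranspose_same
      (vecMul_injective_iff_isUnit.mpr (isUnit_nonsing_inv_iff.mpr hS))
  have hHX : H = S * X * Sᵀ := by
    simp only [X, ← mul_assoc, mul_nonsing_inv S hSdet, one_mul]
    rw [mul_assoc, ← transpose_mul, mul_nonsing_inv S hSdet, transpose_one, mul_one]
  set M := Sᵀ * B * S
  have hlin : ((S * Sᵀ - H)ᵀ * (-B)).trace = ((X - 1)ᵀ * M).trace := by
    have : (S * Sᵀ - S * X * Sᵀ)ᵀ * (-B) = S * ((X - 1)ᵀ * (Sᵀ * B)) := by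
      simp only [transpose_sub, transpose_mul, transpose_transpose, transpose_one]
      noncomm_ring
    rw [hHX, this, trace_mul_comm]
    simp only [M, mul_assoc]
  have hquad : (Mᵀ * M).trace = (S * Sᵀ * B * (S * Sᵀ) * B).trace := by
    rw [show Mᵀ * M = Sᵀ * B * S * Sᵀ * B * S by simp [M, hB.eq, mul_assoc], trace_mul_comm]
    simp only [mul_assoc]
  have hbreg : logDetBreg H (S * Sᵀ) = logDetBreg X 1 := by
    rw [hHX, ← logDetBreg_conj hS hX.det_pos.ne' (by simp), mul_one]
  rw [← hquad] at hηB ⊢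
  rw [hlin, hbreg]
  exact hX.trace_transpose_sub_one_mul_sub_logDetBreg_one_le hη hηB

end Matrix

theorem stmt2_general {n : ℕ} (Ω : Set (Matrix (Fin n) (Fin n) ℝ))
    (hpd : ∀ X ∈ Ω, X.PosDef) (H₀ : Matrix (Fin n) (Fin n) ℝ) (hH₀ : H₀ ∈ Ω)
    (B : Matrix (Fin n) (Fin n) ℝ) (hB : B.IsSymm) (m : ℝ)
    (hmB : Real.sqrt ((H₀ * B * H₀ * B).trace) ≤ m) :
    ∀ η : ℝ, 0 < η → η ≤ 1 / (16 * m) → ∀ H ∈ Ω,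
      ((H₀ - H)ᵀ * (-B)).trace - logDetBreg H H₀ / η ≤
        8 * η * (H₀ * B * H₀ * B).trace := by
  intro η hη hηm H hH
  have hm : 0 < m := by linarith [one_div_pos.mp (hη.trans_le hηm)]
  refine (hpd H₀ hH₀).trace_transpose_sub_mul_neg_sub_logDetBreg_le (hpd H hH) hB hη ?_
  calc η * √(H₀ * B * H₀ * B).trace ≤ 1 / (16 * m) * m := by gcongr
    _ = 1 / 16 := by field_simp

theorem stmt2 {n : ℕ} (hn : 1 ≤ n) (Ω : Set (Matrix (Fin n) (Fin n) ℝ))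
    (hne : Ω.Nonempty) (hcompact : IsCompact Ω) (hconv : Convex ℝ Ω)
    (hpd : ∀ X ∈ Ω, X.PosDef) (H₀ : Matrix (Fin n) (Fin n) ℝ) (hH₀ : H₀ ∈ Ω)
    (B : Matrix (Fin n) (Fin n) ℝ) (hB : B.IsSymm) (m : ℝ) (hm : 0 < m)
    (hmB : Real.sqrt ((H₀ * B * H₀ * B).trace) ≤ m) :
    ∀ η : ℝ, 0 < η → η ≤ 1 / (16 * m) → ∀ H ∈ Ω,
      ((H₀ - H)ᵀ * (-B)).trace - logDetBreg H H₀ / η ≤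
        8 * η * (H₀ * B * H₀ * B).trace :=
  stmt2_general Ω hpd H₀ hH₀ B hB m hmB
end

section
/- Let Ω ⊆ ℝ^d be a convex set, let ψ : ℝ^d → ℝ be convex and differentiable, let η > 0, T ≥ 1, and g_1, …, g_T ∈ ℝ^d. Suppose that for each t ∈ {1, …, T} there is w_t ∈ Ω such that ⟨w_t, ∑_{τ<t} g_τ⟩ + ψ(w_t)/η ≤ ⟨w, ∑_{τ<t} g_τ⟩ + ψ(w)/η for all w ∈ Ω, and suppose ψ attains its minimum over Ω at some point w_min ∈ Ω. Then for every u ∈ Ω: ∑_{t=1}^T ⟨w_t − u, g_t⟩ ≤ (ψ(u) − ψ(w_min))/η + ∑_{t=1}^T sup_{w∈Ω} ( ⟨w_t − w, g_t⟩ − D_ψ(w, w_t)/η ), where the suprema are taken in the extended reals ℝ ∪ {+∞}. -/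
open scoped BigOperators RealInnerProductSpace

lemma myEReal_coe_sum {ι : Type*} (s : Finset ι) (f : ι → ℝ) :
    ((∑ i ∈ s, f i : ℝ) : EReal) = ∑ i ∈ s, ((f i : ℝ) : EReal) := by
  induction s using Finset.cons_induction with
  | empty => simp
  | cons a s ha ih => rw [Finset.sum_cons, Finset.sum_cons, EReal.coe_add, ih]

/-- Variational inequality at a minimizer over a convex set. -/
lemma my_varineq {E : Type*} [NormedAddCommGroup E] [InnerProductSpace ℝ E] {s : Set E}
    (hs : Convex ℝ s) {f : E → ℝ} {p v : E} (hf : DifferentiableAt ℝ f p)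
    (hp : p ∈ s) (hv : v ∈ s) (hmin : ∀ x ∈ s, f p ≤ f x) :
    0 ≤ fderiv ℝ f p (v - p) := by
  have hc : HasDerivAt (fun lam : ℝ => p + lam • (v - p)) (v - p) 0 := by
    simpa using ((hasDerivAt_id (0:ℝ)).smul_const (v - p)).const_add p
  have hh : HasDerivAt (fun lam : ℝ => f (p + lam • (v - p))) (fderiv ℝ f p (v - p)) 0 := by
    have hf' : HasFDerivAt f (fderiv ℝ f p) (p + (0:ℝ) • (v - p)) := by
      simpa using hf.hasFDerivAt
    exact hf'.comp_hasDerivAt 0 hc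
  have htends := hasDerivAt_iff_tendsto_slope.mp hh
  have htends' : Filter.Tendsto (slope (fun lam : ℝ => f (p + lam • (v - p))) 0)
      (nhdsWithin 0 (Set.Ioi 0)) (nhds (fderiv ℝ f p (v - p))) :=
    htends.mono_left (nhdsWithin_mono _ (fun x hx => ne_of_gt hx))
  refine ge_of_tendsto htends' ?_
  filter_upwards [Ioo_mem_nhdsGT_of_mem (Set.left_mem_Ico.2 one_pos)] with lam hlam
  have hmem : p + lam • (v - p) ∈ s := by
    have := hs hp hv (by have := hlam.2; linarith : (0:ℝ) ≤ 1 - lam) (le_of_lt hlam.1)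
      (by ring)
    convert this using 1
    module
  have hge := hmin _ hmem
  rw [slope_def_field]
  simp only [sub_zero]
  have h0 : f (p + (0:ℝ) • (v - p)) = f p := by simp
  exact div_nonneg (by simpa using sub_nonneg.2 hge) (le_of_lt hlam.1)

theorem stmt3 {d T : ℕ} (hT : 1 ≤ T) (Ω : Set (EuclideanSpace ℝ (Fin d)))
    (hΩ : Convex ℝ Ω) (ψ : EuclideanSpace ℝ (Fin d) → ℝ)
    (hψconv : ConvexOn ℝ Set.univ ψ) (hψdiff : Differentiable ℝ ψ)
    (η : ℝ) (hη : 0 < η) (g w : Fin T → EuclideanSpace ℝ (Fin d))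
    (hw : ∀ t : Fin T, w t ∈ Ω ∧ ∀ v ∈ Ω,
      ⟪w t, ∑ τ ∈ Finset.Iio t, g τ⟫ + ψ (w t) / η ≤
        ⟪v, ∑ τ ∈ Finset.Iio t, g τ⟫ + ψ v / η)
    (wmin : EuclideanSpace ℝ (Fin d)) (hwmin : wmin ∈ Ω)
    (hwminle : ∀ v ∈ Ω, ψ wmin ≤ ψ v) :
    ∀ u ∈ Ω,
      ((∑ t : Fin T, ⟪w t - u, g t⟫ : ℝ) : EReal) ≤
        (((ψ u - ψ wmin) / η : ℝ) : EReal) +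
          ∑ t : Fin T, ⨆ v ∈ Ω,
            ((⟪w t - v, g t⟫ -
                (ψ v - ψ (w t) - ⟪gradient ψ (w t), v - w t⟫) / η : ℝ) : EReal) := by
  intro u hu
  have hη0 : η ≠ 0 := ne_of_gt hη
  -- partial sums of gradients, indexed by ℕ
  set S : ℕ → EuclideanSpace ℝ (Fin d) := fun n => ∑ τ ∈ Finset.filter (fun τ : Fin T => τ.val < n) Finset.univ, g τ
    with hSdef
  have hS : ∀ t : Fin T, ∑ τ ∈ Finset.Iio t, g τ = S t.val := by
    intro t
    rw [hSdef]
    congr 1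
    ext τ
    simp only [Finset.mem_Iio, Finset.mem_filter, Finset.mem_univ, true_and, Fin.lt_def]
  -- the iterates, extended by u at time T
  set ww : ℕ → EuclideanSpace ℝ (Fin d) := fun n => if h : n < T then w ⟨n, h⟩ else u with hwwdef
  have hwwΩ : ∀ n, ww n ∈ Ω := by
    intro n
    rw [hwwdef]
    dsimp only
    split
    · exact (hw _).1
    · exact hu
  set gg : ℕ → EuclideanSpace ℝ (Fin d) := fun n => if h : n < T then g ⟨n, h⟩ else 0 with hggdef
  set sdiff : ℕ → ℝ := fun n => ⟪ww n - ww (n+1), gg n⟫ -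
      (ψ (ww (n+1)) - ψ (ww n) - ⟪gradient ψ (ww n), ww (n+1) - ww n⟫) / η with hsdef
  set A : ℕ → ℝ := fun n => ⟪ww n, S n⟫ + η⁻¹ * ψ (ww n) with hAdef
  -- the per-step inequality
  have step : ∀ n, n < T → ⟪ww n, gg n⟫ - sdiff n ≤ A (n+1) - A n := by
    intro n hn
    set t : Fin T := ⟨n, hn⟩ with ht
    have hwwn : ww n = w t := by rw [hwwdef]; exact dif_pos hn
    have hggn : gg n = g t := by rw [hggdef]; exact dif_pos hn
    have hSstep : S (n+1) = S n + g t := by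
      rw [hSdef]
      dsimp only
      have hfil : Finset.filter (fun τ : Fin T => τ.val < n+1) Finset.univ =
          insert t (Finset.filter (fun τ : Fin T => τ.val < n) Finset.univ) := by
        ext τ
        simp only [Finset.mem_filter, Finset.mem_univ, true_and, Finset.mem_insert]
        constructor
        · intro hlt
          rcases Nat.lt_succ_iff_lt_or_eq.mp hlt with h | h
          · exact Or.inr h
          · exact Or.inl (Fin.ext h)
        · rintro (rfl | h)
          · exact Nat.lt_succ_self n
          · exact Nat.lt_succ_of_lt h
      rw [hfil, Finset.sum_insert (by simp [ht])]
      abel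
    set v : EuclideanSpace ℝ (Fin d) := ww (n+1) with hv
    have hvΩ : v ∈ Ω := hwwΩ (n+1)
    -- the objective at round t
    set F : EuclideanSpace ℝ (Fin d) → ℝ := fun x => ⟪x, S n⟫ + η⁻¹ * ψ x with hFdef
    have h1 : HasFDerivAt (fun x : EuclideanSpace ℝ (Fin d) => ⟪x, S n⟫) (innerSL ℝ (S n)) (w t) := by
      have heq : (fun x : EuclideanSpace ℝ (Fin d) => ⟪x, S n⟫) = fun x => innerSL ℝ (S n) x :=
        funext fun x => by
          rw [innerSL_apply_apply]
          exact real_inner_comm (S n) x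
      rw [heq]
      exact (innerSL ℝ (S n)).hasFDerivAt
    have h2 : HasFDerivAt ψ
        ((InnerProductSpace.toDual ℝ (EuclideanSpace ℝ (Fin d))) (gradient ψ (w t))) (w t) :=
      (hψdiff (w t)).hasGradientAt.hasFDerivAt
    have hF : HasFDerivAt F
        (innerSL ℝ (S n) + η⁻¹ • ((InnerProductSpace.toDual ℝ (EuclideanSpace ℝ (Fin d))) (gradient ψ (w t)))) (w t) :=
      h1.add (h2.const_mul η⁻¹)
    have hmin : ∀ x ∈ Ω, F (w t) ≤ F x := by
      intro x hx
      have := (hw t).2 x hx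
      rw [hS t] at this
      simpa [hFdef, div_eq_inv_mul, mul_comm] using this
    have key0 := my_varineq hΩ hF.differentiableAt (hw t).1 hvΩ hmin
    rw [hF.fderiv] at key0
    have key : 0 ≤ ⟪S n, v - w t⟫ + η⁻¹ * ⟪gradient ψ (w t), v - w t⟫ := by
      simpa [InnerProductSpace.toDual_apply_apply] using key0
    rw [real_inner_comm] at key
    -- now unfold everything and conclude by linear arithmetic
    rw [hAdef]
    dsimp only
    rw [hsdef]
    dsimp only
    rw [hwwn, hggn, hSstep, ← hv]
    rw [inner_sub_left] at key
    simp only [inner_sub_left, inner_add_right, div_eq_inv_mul]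
    have hinner : ⟪gradient ψ (w t), v - w t⟫ = ⟪gradient ψ (w t), v⟫ - ⟪gradient ψ (w t), w t⟫ :=
      inner_sub_right _ _ _
    rw [hinner] at key ⊢
    ring_nf
    ring_nf at key
    linarith [key]
  -- telescoping
  have tel : ∑ n ∈ Finset.range T, (⟪ww n, gg n⟫ - sdiff n) ≤ A T - A 0 := by
    rw [← Finset.sum_range_sub A T]
    exact Finset.sum_le_sum fun n hn => step n (Finset.mem_range.mp hn)
  have hwwT : ww T = u := by rw [hwwdef]; exact dif_neg (lt_irrefl T)
  have hST : S T = ∑ τ : Fin T, g τ := by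
    rw [hSdef]
    dsimp only
    rw [Finset.filter_true_of_mem fun τ _ => τ.isLt]
  have hA0 : A 0 = η⁻¹ * ψ (ww 0) := by
    rw [hAdef]
    dsimp only
    have : S 0 = 0 := by
      rw [hSdef]
      dsimp only
      rw [Finset.filter_false_of_mem (by simp)]
      simp
    rw [this, inner_zero_right, zero_add]
  have hAT : A T = ⟪u, ∑ τ : Fin T, g τ⟫ + η⁻¹ * ψ u := by
    rw [hAdef]; dsimp only; rw [hwwT, hST]
  have hmin0 : ψ wmin ≤ ψ (ww 0) := hwminle _ (hwwΩ 0)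
  have e1 : ∑ n ∈ Finset.range T, ⟪ww n, gg n⟫ = ∑ t : Fin T, ⟪w t, g t⟫ := by
    rw [← Fin.sum_univ_eq_sum_range (fun n => (⟪ww n, gg n⟫ : ℝ)) T]
    refine Finset.sum_congr rfl fun t _ => ?_
    have h1 : ww t.val = w t := by rw [hwwdef]; simp [t.isLt]
    have h2 : gg t.val = g t := by rw [hggdef]; simp [t.isLt]
    rw [h1, h2]
  have e2 : ∑ n ∈ Finset.range T, sdiff n = ∑ t : Fin T, sdiff t.val :=
    (Fin.sum_univ_eq_sum_range sdiff T).symm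
  have expand : ∑ t : Fin T, (⟪w t - u, g t⟫ : ℝ) =
      ∑ t : Fin T, (⟪w t, g t⟫ : ℝ) - ⟪u, ∑ τ : Fin T, g τ⟫ := by
    rw [inner_sum, ← Finset.sum_sub_distrib]
    exact Finset.sum_congr rfl fun t _ => by rw [inner_sub_left]
  -- the main real-valued inequality
  have main : ∑ t : Fin T, (⟪w t - u, g t⟫ : ℝ) ≤
      (ψ u - ψ wmin) / η + ∑ t : Fin T, sdiff t.val := by
    rw [Finset.sum_sub_distrib, e1, e2] at tel
    have hmono : η⁻¹ * ψ wmin ≤ η⁻¹ * ψ (ww 0) :=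
      mul_le_mul_of_nonneg_left hmin0 (by positivity)
    rw [expand, div_eq_inv_mul]
    rw [hAT, hA0] at tel
    linarith [tel]
  -- pass to EReal
  calc ((∑ t : Fin T, ⟪w t - u, g t⟫ : ℝ) : EReal)
      ≤ (((ψ u - ψ wmin) / η + ∑ t : Fin T, sdiff t.val : ℝ) : EReal) :=
        EReal.coe_le_coe_iff.mpr main
    _ = (((ψ u - ψ wmin) / η : ℝ) : EReal) + ∑ t : Fin T, ((sdiff t.val : ℝ) : EReal) := by
        rw [EReal.coe_add, myEReal_coe_sum]
    _ ≤ (((ψ u - ψ wmin) / η : ℝ) : EReal) +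
          ∑ t : Fin T, ⨆ v ∈ Ω,
            ((⟪w t - v, g t⟫ -
                (ψ v - ψ (w t) - ⟪gradient ψ (w t), v - w t⟫) / η : ℝ) : EReal) := by
        refine add_le_add_right (Finset.sum_le_sum fun t _ => ?_) _
        have h1 : ww t.val = w t := by rw [hwwdef]; simp [t.isLt]
        have h2 : gg t.val = g t := by rw [hggdef]; simp [t.isLt]
        have hle := le_iSup₂ (f := fun (v : EuclideanSpace ℝ (Fin d)) (_ : v ∈ Ω) =>
            ((⟪w t - v, g t⟫ -
              (ψ v - ψ (w t) - ⟪gradient ψ (w t), v - w t⟫) / η : ℝ) : EReal))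
          (ww (t.val+1)) (hwwΩ (t.val+1))
        refine le_trans (le_of_eq ?_) hle
        rw [hsdef]
        dsimp only
        rw [h1, h2]
end

section
/- Let Ω ⊆ ℝ^d be a convex set, ψ : ℝ^d → ℝ convex and differentiable, η > 0, and let K, τ, J be positive integers with K = Jτ. For j ∈ {1, …, J} set T_j = {τ(j−1)+1, …, τj}. Let g_1, …, g_K ∈ ℝ^d, define g_{(j)} = (1/τ) ∑_{k ∈ T_j} g_k, and suppose that for each j there is w_{(j)} ∈ Ω satisfying ⟨w_{(j)}, ∑_{i<j} g_{(i)}⟩ + ψ(w_{(j)})/η ≤ ⟨w, ∑_{i<j} g_{(i)}⟩ + ψ(w)/η for all w ∈ Ω. Set w_k = w_{(j)} for all k ∈ T_j, and suppose ψ attains its minimum over Ω at some w_min ∈ Ω. Then for any u ∈ Ω: ∑_{k=1}^K ⟨g_k, w_k − u⟩ ≤ τ(ψ(u) − ψ(w_min))/η + ∑_{k=1}^K sup_{w∈Ω} ( ⟨w_k − w, g_k⟩ − D_ψ(w, w_k)/η ), where the suprema are taken in the extended reals ℝ ∪ {+∞}. -/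
open scoped BigOperators RealInnerProductSpace

/-! Within block `j` every round plays `w j`, so the blocked regret is `τ` times the regret of
ordinary FTRL against the block averages `G j`. For ordinary FTRL, first-order optimality of the
leader `w j` of `F_j v = ⟪v, ∑_{i<j} G i⟫ + ψ v / η` over the convex set `Ω` gives
`F_j (w j) + D_ψ(v, w j) / η ≤ F_j v`. Applied with `v` the next leader (and `v = u` after the last
block), these inequalities telescope and leave `(ψ u - ψ (w 0)) / η` plus, for every round, the value
at the next leader of the expression under the supremum. -/

open Finset

theorem Function.update_mem_of_le {α : Type*} {Ω : Set α} {w : ℕ → α} {J : ℕ}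
    (hw : ∀ j < J, w j ∈ Ω) {u : α} (hu : u ∈ Ω) {j : ℕ} (hj : j ≤ J) : Function.update w J u j ∈ Ω := by
  rcases hj.lt_or_eq with hj | rfl
  · simpa [Function.update_of_ne hj.ne] using hw j hj
  · simpa using hu

section Bregman

variable {E : Type*} [NormedAddCommGroup E] [InnerProductSpace ℝ E] [CompleteSpace E]

noncomputable def bregmanDiv (ψ : E → ℝ) (v w : E) : ℝ := ψ v - ψ w - ⟪gradient ψ w, v - w⟫

theorem inner_add_div_add_bregmanDiv_le_of_isMinOn {Ω : Set E} (hΩ : Convex ℝ Ω) {ψ : E → ℝ}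
    {η : ℝ} {s x v : E} (hψ : DifferentiableAt ℝ ψ x) (hx : x ∈ Ω)
    (hmin : IsMinOn (fun v => ⟪v, s⟫ + ψ v / η) Ω x) (hv : v ∈ Ω) :
    ⟪x, s⟫ + ψ x / η + bregmanDiv ψ v x / η ≤ ⟪v, s⟫ + ψ v / η := by
  have hlin : HasFDerivAt (fun v => ⟪v, s⟫) (innerSL ℝ s) x :=
    (innerSL ℝ s).hasFDerivAt.congr_of_eventuallyEq (.of_forall fun v => real_inner_comm s v)
  have hscaled : HasFDerivAt (fun v => ψ v / η) (η⁻¹ • fderiv ℝ ψ x) x := by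
    simpa only [div_eq_inv_mul] using hψ.hasFDerivAt.const_mul η⁻¹
  have hderiv := hlin.add hscaled
  have hfirst_order := hmin.localize.hasFDerivWithinAt_nonneg hderiv.hasFDerivWithinAt
    (sub_mem_posTangentConeAt_of_segment_subset (hΩ.segment_subset hx hv))
  have hgrad : ⟪gradient ψ x, v - x⟫ = fderiv ℝ ψ x (v - x) := by
    rw [gradient, InnerProductSpace.toDual_symm_apply]
  simp only [add_apply, smul_apply, innerSL_apply_apply,
    smul_eq_mul, ← hgrad, inner_sub_right, mul_sub] at hfirst_order
  simp only [bregmanDiv, inner_sub_right, real_inner_comm s, div_eq_inv_mul, mul_sub]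
  linarith

theorem ftrl_regret_le {Ω : Set E} (hΩ : Convex ℝ Ω) {ψ : E → ℝ} (hψ : Differentiable ℝ ψ)
    {η : ℝ} (hη : 0 < η) {wmin : E} (hwmin : ∀ v ∈ Ω, ψ wmin ≤ ψ v) (G w : ℕ → E) {J : ℕ}
    (hw : ∀ j < J, w j ∈ Ω ∧ IsMinOn (fun v => ⟪v, ∑ i ∈ range j, G i⟫ + ψ v / η) Ω (w j))
    {u : E} (hu : u ∈ Ω) :
    ∑ j ∈ range J, ⟪w j - u, G j⟫ ≤ (ψ u - ψ wmin) / η +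
      ∑ j ∈ range J, (⟪w j - Function.update w J u (j + 1), G j⟫ -
        bregmanDiv ψ (Function.update w J u (j + 1)) (w j) / η) := by
  set x := Function.update w J u
  have hx_lt : ∀ j < J, x j = w j := fun j hj => Function.update_of_ne hj.ne _ _
  have hxΩ : ∀ j ≤ J, x j ∈ Ω := fun j => Function.update_mem_of_le (fun j hj => (hw j hj).1) hu
  set S : ℕ → E := fun j => ∑ i ∈ range j, G i
  set Φ : ℕ → ℝ := fun j => ⟪x j, S j⟫ + ψ (x j) / η
  have hstep : ∀ j ∈ range J, ⟪w j, G j⟫ - (Φ (j + 1) - Φ j) ≤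
      ⟪w j - x (j + 1), G j⟫ - bregmanDiv ψ (x (j + 1)) (w j) / η := by
    intro j hj
    have hj := mem_range.mp hj
    have hS : S (j + 1) = S j + G j := sum_range_succ G j
    have hleader := inner_add_div_add_bregmanDiv_le_of_isMinOn hΩ (hψ (w j)) (hw j hj).1
      (hw j hj).2 (hxΩ (j + 1) hj)
    simp only [Φ, hS, hx_lt j hj, inner_add_right, inner_sub_left]
    linarith
  have htelescope := sum_le_sum hstep
  rw [sum_sub_distrib, sum_range_sub] at htelescope
  have hΦ0 : Φ 0 = ψ (x 0) / η := by simp [Φ, S]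
  have hΦJ : Φ J = ⟪u, S J⟫ + ψ u / η := by simp [Φ, x]
  have hψ0 : ψ wmin / η ≤ ψ (x 0) / η :=
    div_le_div_of_nonneg_right (hwmin _ (hxΩ 0 J.zero_le)) hη.le
  have hregret : ∑ j ∈ range J, ⟪w j - u, G j⟫ = ∑ j ∈ range J, ⟪w j, G j⟫ - ⟪u, S J⟫ := by
    simp only [S, inner_sub_left, sum_sub_distrib, inner_sum]
  rw [hregret, sub_div]
  linarith

end Bregman

theorem Finset.sum_range_mul_eq_sum_sum_Ico {M : Type*} [AddCommMonoid M] (f : ℕ → M) (τ J : ℕ) :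
    ∑ k ∈ range (J * τ), f k = ∑ j ∈ range J, ∑ k ∈ Ico (τ * j) (τ * (j + 1)), f k := by
  induction J with
  | zero => simp
  | succ J ih =>
    rw [sum_range_succ, ← ih, range_eq_Ico, range_eq_Ico, Nat.mul_comm (J + 1), Nat.mul_comm J,
      sum_Ico_consecutive f (Nat.zero_le _) (Nat.mul_le_mul_left τ J.le_succ)]

theorem sum_range_mul_inner_div_sub_eq {E : Type*} [NormedAddCommGroup E] [InnerProductSpace ℝ E]
    {τ : ℕ} {g G : ℕ → E} (hG : ∀ j, G j = (τ : ℝ)⁻¹ • ∑ k ∈ Ico (τ * j) (τ * (j + 1)), g k)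
    (a : ℕ → E) (c : ℕ → ℝ) (J : ℕ) :
    ∑ k ∈ range (J * τ), (⟪a (k / τ), g k⟫ - c (k / τ)) =
      τ * ∑ j ∈ range J, (⟪a j, G j⟫ - c j) := by
  rw [sum_range_mul_eq_sum_sum_Ico, mul_sum]
  refine sum_congr rfl fun j _ => ?_
  have hdiv : ∀ k ∈ Ico (τ * j) (τ * (j + 1)), k / τ = j := fun k hk => by
    rw [mem_Ico] at hk
    exact Nat.div_eq_of_lt_le (by linarith [hk.1]) (by linarith [hk.2])
  have hblock : ∑ k ∈ Ico (τ * j) (τ * (j + 1)), g k = (τ : ℝ) • G j := by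
    rcases Nat.eq_zero_or_pos τ with rfl | hτ
    · simp
    · rw [hG, smul_inv_smul₀ (by positivity)]
  rw [sum_congr rfl fun k hk => by rw [hdiv k hk], sum_sub_distrib, ← inner_sum, hblock,
    sum_const, Nat.card_Ico, Nat.mul_succ, Nat.add_sub_cancel_left, nsmul_eq_mul,
    real_inner_smul_right]
  ring

theorem EReal.coe_finset_sum {ι : Type*} (s : Finset ι) (f : ι → ℝ) :
    ((∑ i ∈ s, f i : ℝ) : EReal) = ∑ i ∈ s, (f i : EReal) :=
  map_sum (⟨⟨Real.toEReal, EReal.coe_zero⟩, EReal.coe_add⟩ : ℝ →+ EReal) f s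

theorem stmt4_general {d : ℕ} (K τ J : ℕ) (hK : K = J * τ)
    (Ω : Set (EuclideanSpace ℝ (Fin d))) (hΩ : Convex ℝ Ω)
    (ψ : EuclideanSpace ℝ (Fin d) → ℝ)
    (hψdiff : Differentiable ℝ ψ)
    (η : ℝ) (hη : 0 < η) (g : ℕ → EuclideanSpace ℝ (Fin d))
    (G : ℕ → EuclideanSpace ℝ (Fin d))
    (hG : ∀ j, G j = (τ : ℝ)⁻¹ • ∑ k ∈ Finset.Ico (τ * j) (τ * (j + 1)), g k)
    (w : ℕ → EuclideanSpace ℝ (Fin d))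
    (hw : ∀ j < J, w j ∈ Ω ∧ ∀ v ∈ Ω,
      ⟪w j, ∑ i ∈ Finset.range j, G i⟫ + ψ (w j) / η ≤
        ⟪v, ∑ i ∈ Finset.range j, G i⟫ + ψ v / η)
    (wmin : EuclideanSpace ℝ (Fin d))
    (hwminle : ∀ v ∈ Ω, ψ wmin ≤ ψ v) :
    ∀ u ∈ Ω,
      ((∑ k ∈ Finset.range K, ⟪g k, w (k / τ) - u⟫ : ℝ) : EReal) ≤
        (((τ : ℝ) * (ψ u - ψ wmin) / η : ℝ) : EReal) +
          ∑ k ∈ Finset.range K, ⨆ v ∈ Ω,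
            ((⟪w (k / τ) - v, g k⟫ -
                (ψ v - ψ (w (k / τ)) -
                  ⟪gradient ψ (w (k / τ)), v - w (k / τ)⟫) / η : ℝ) : EReal) := by
  intro u hu
  subst hK
  set x := Function.update w J u
  have hregret := ftrl_regret_le hΩ hψdiff hη hwminle G w hw hu
  have hreal : ∑ k ∈ range (J * τ), ⟪g k, w (k / τ) - u⟫ ≤ τ * (ψ u - ψ wmin) / η +
      ∑ k ∈ range (J * τ), (⟪w (k / τ) - x (k / τ + 1), g k⟫ -
        bregmanDiv ψ (x (k / τ + 1)) (w (k / τ)) / η) := by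
    have hLHS := sum_range_mul_inner_div_sub_eq hG (fun j => w j - u) 0 J
    simp only [Pi.zero_apply, sub_zero] at hLHS
    rw [sum_range_mul_inner_div_sub_eq hG (fun j => w j - x (j + 1))
      (fun j => bregmanDiv ψ (x (j + 1)) (w j) / η), mul_div_assoc, ← mul_add]
    simp only [real_inner_comm _ (g _)]
    rw [hLHS]
    exact mul_le_mul_of_nonneg_left hregret τ.cast_nonneg
  refine (EReal.coe_le_coe_iff.mpr hreal).trans ?_
  rw [EReal.coe_add, EReal.coe_finset_sum]
  gcongr with k hk
  have hk : k / τ < J := Nat.div_lt_of_lt_mul (by rw [mul_comm]; exact mem_range.mp hk)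
  exact le_iSup₂_of_le (x (k / τ + 1))
    (Function.update_mem_of_le (fun j hj => (hw j hj).1) hu hk) le_rfl

theorem stmt4 {d : ℕ} (K τ J : ℕ) (hτ : 0 < τ) (hJ : 0 < J) (hK : K = J * τ)
    (Ω : Set (EuclideanSpace ℝ (Fin d))) (hΩ : Convex ℝ Ω)
    (ψ : EuclideanSpace ℝ (Fin d) → ℝ)
    (hψconv : ConvexOn ℝ Set.univ ψ) (hψdiff : Differentiable ℝ ψ)
    (η : ℝ) (hη : 0 < η) (g : ℕ → EuclideanSpace ℝ (Fin d))
    (G : ℕ → EuclideanSpace ℝ (Fin d))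
    (hG : ∀ j, G j = (τ : ℝ)⁻¹ • ∑ k ∈ Finset.Ico (τ * j) (τ * (j + 1)), g k)
    (w : ℕ → EuclideanSpace ℝ (Fin d))
    (hw : ∀ j < J, w j ∈ Ω ∧ ∀ v ∈ Ω,
      ⟪w j, ∑ i ∈ Finset.range j, G i⟫ + ψ (w j) / η ≤
        ⟪v, ∑ i ∈ Finset.range j, G i⟫ + ψ v / η)
    (wmin : EuclideanSpace ℝ (Fin d)) (hwmin : wmin ∈ Ω)
    (hwminle : ∀ v ∈ Ω, ψ wmin ≤ ψ v) :
    ∀ u ∈ Ω,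
      ((∑ k ∈ Finset.range K, ⟪g k, w (k / τ) - u⟫ : ℝ) : EReal) ≤
        (((τ : ℝ) * (ψ u - ψ wmin) / η : ℝ) : EReal) +
          ∑ k ∈ Finset.range K, ⨆ v ∈ Ω,
            ((⟪w (k / τ) - v, g k⟫ -
                (ψ v - ψ (w (k / τ)) -
                  ⟪gradient ψ (w (k / τ)), v - w (k / τ)⟫) / η : ℝ) : EReal) :=
  stmt4_general K τ J hK Ω hΩ ψ hψdiff η hη g G hG w hw wmin hwminle
end

section
/- Let d ≥ 1 and K ≥ 1 be integers, let δ ∈ (0, 1], let n ≥ 0, and let φ_1, …, φ_n ∈ ℝ^d and y_1, …, y_n ∈ ℝ. Set Λ = I + ∑_{i=1}^n φ_i φ_iᵀ and define L(ξ) = ∑_{i=1}^n (y_i − φ_iᵀ ξ)² for ξ ∈ ℝ^d, and let 𝔅 = {ξ ∈ ℝ^d : ‖ξ‖₂ ≤ √d}. Suppose ξ₁, ξ₂ ∈ 𝔅 both satisfy L(ξ_j) − min_{ξ ∈ 𝔅} L(ξ) ≤ 16 d^{5/2} log(18 d^{3/2} K / δ). Then ‖ξ₁ − ξ₂‖_Λ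 ≤ 10 d^{5/4} √(log(18 d^{3/2} K / δ)). -/
open scoped BigOperators Matrix

set_option maxHeartbeats 1000000

theorem stmt5 {d K : ℕ} (hd : 1 ≤ d) (hK : 1 ≤ K) (δ : ℝ) (hδ0 : 0 < δ)
    (hδ1 : δ ≤ 1) (n : ℕ) (φ : Fin n → Fin d → ℝ) (y : Fin n → ℝ)
    (Λ : Matrix (Fin d) (Fin d) ℝ)
    (hΛ : Λ = 1 + ∑ i, Matrix.vecMulVec (φ i) (φ i))
    (L : (Fin d → ℝ) → ℝ) (hL : ∀ ξ, L ξ = ∑ i, (y i - φ i ⬝ᵥ ξ) ^ 2)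
    (𝔅 : Set (Fin d → ℝ))
    (h𝔅 : 𝔅 = {ξ : Fin d → ℝ | Real.sqrt (∑ j, ξ j ^ 2) ≤ Real.sqrt d})
    (ξ₁ ξ₂ : Fin d → ℝ) (hξ₁ : ξ₁ ∈ 𝔅) (hξ₂ : ξ₂ ∈ 𝔅)
    (hL₁ : L ξ₁ - sInf (L '' 𝔅) ≤
      16 * (d : ℝ) ^ ((5 : ℝ) / 2) *
        Real.log (18 * (d : ℝ) ^ ((3 : ℝ) / 2) * K / δ))
    (hL₂ : L ξ₂ - sInf (L '' 𝔅) ≤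
      16 * (d : ℝ) ^ ((5 : ℝ) / 2) *
        Real.log (18 * (d : ℝ) ^ ((3 : ℝ) / 2) * K / δ)) :
    Real.sqrt ((ξ₁ - ξ₂) ⬝ᵥ Λ *ᵥ (ξ₁ - ξ₂)) ≤
      10 * (d : ℝ) ^ ((5 : ℝ) / 4) *
        Real.sqrt (Real.log (18 * (d : ℝ) ^ ((3 : ℝ) / 2) * K / δ)) := by
  set c : ℝ := Real.log (18 * (d : ℝ) ^ ((3 : ℝ) / 2) * K / δ) with hc_def
  have hd1 : (1 : ℝ) ≤ (d : ℝ) := by exact_mod_cast hd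
  have hK1 : (1 : ℝ) ≤ (K : ℝ) := by exact_mod_cast hK
  have hd32 : (1 : ℝ) ≤ (d : ℝ) ^ ((3 : ℝ) / 2) := by
    have := Real.rpow_le_rpow (by norm_num) hd1 (by norm_num : (0:ℝ) ≤ 3/2)
    simpa using this
  have harg : (18 : ℝ) ≤ 18 * (d : ℝ) ^ ((3 : ℝ) / 2) * K / δ := by
    rw [le_div_iff₀ hδ0]
    nlinarith
  have hc1 : (1 : ℝ) ≤ c := by
    rw [hc_def, ← Real.log_exp 1]
    apply Real.log_le_log (Real.exp_pos 1)
    have := Real.exp_one_lt_d9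
    linarith
  have hc0 : (0 : ℝ) ≤ c := le_trans zero_le_one hc1
  -- membership facts
  have hmem : ∀ ξ : Fin d → ℝ, ξ ∈ 𝔅 → ∑ j, ξ j ^ 2 ≤ (d : ℝ) := by
    intro ξ hξ
    rw [h𝔅] at hξ
    have hξ' : Real.sqrt (∑ j, ξ j ^ 2) ≤ Real.sqrt d := hξ
    have h0 : (0:ℝ) ≤ ∑ j, ξ j ^ 2 := by positivity
    nlinarith [Real.sq_sqrt h0, Real.sq_sqrt (Nat.cast_nonneg d : (0:ℝ) ≤ d),
      Real.sqrt_nonneg ((d : ℝ)), Real.sqrt_nonneg (∑ j, ξ j ^ 2), hξ']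
  have hmem' : ∀ ξ : Fin d → ℝ, (∑ j, ξ j ^ 2 ≤ (d : ℝ)) → ξ ∈ 𝔅 := by
    intro ξ hξ
    rw [h𝔅]
    exact Real.sqrt_le_sqrt hξ
  have hb1 := hmem ξ₁ hξ₁
  have hb2 := hmem ξ₂ hξ₂
  -- the midpoint
  set m : Fin d → ℝ := fun j => (ξ₁ j + ξ₂ j) / 2 with hm_def
  have hmmem : m ∈ 𝔅 := by
    apply hmem'
    have h : ∀ j : Fin d, m j ^ 2 ≤ (ξ₁ j ^ 2 + ξ₂ j ^ 2) / 2 := by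
      intro j; simp only [hm_def]; nlinarith [sq_nonneg (ξ₁ j - ξ₂ j)]
    calc ∑ j, m j ^ 2 ≤ ∑ j, (ξ₁ j ^ 2 + ξ₂ j ^ 2) / 2 :=
          Finset.sum_le_sum fun j _ => h j
      _ = ((∑ j, ξ₁ j ^ 2) + ∑ j, ξ₂ j ^ 2) / 2 := by
          rw [← Finset.sum_div, Finset.sum_add_distrib]
      _ ≤ (d : ℝ) := by linarith
  -- sInf is below L m
  have hL_nonneg : ∀ x ∈ L '' 𝔅, (0 : ℝ) ≤ x := by
    rintro x ⟨ξ, -, rfl⟩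
    rw [hL]
    positivity
  have hbdd : BddBelow (L '' 𝔅) := ⟨0, fun x hx => hL_nonneg x hx⟩
  have hinf_le : sInf (L '' 𝔅) ≤ L m := csInf_le hbdd ⟨m, hmmem, rfl⟩
  -- parallelogram identity
  have hdot_mid : ∀ i, φ i ⬝ᵥ m = (φ i ⬝ᵥ ξ₁ + φ i ⬝ᵥ ξ₂) / 2 := by
    intro i
    simp only [dotProduct]
    rw [← Finset.sum_add_distrib, Finset.sum_div]
    exact Finset.sum_congr rfl fun j _ => by simp only [hm_def]; ring
  have hdot_sub : ∀ i, φ i ⬝ᵥ (ξ₁ - ξ₂) = φ i ⬝ᵥ ξ₁ - φ i ⬝ᵥ ξ₂ := fun i =>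
    dotProduct_sub _ _ _
  set S : ℝ := ∑ i, (φ i ⬝ᵥ (ξ₁ - ξ₂)) ^ 2 with hS_def
  have hpar : L ξ₁ + L ξ₂ = 2 * L m + S / 2 := by
    rw [hL, hL, hL, hS_def, Finset.mul_sum, Finset.sum_div,
      ← Finset.sum_add_distrib, ← Finset.sum_add_distrib]
    refine Finset.sum_congr rfl fun i _ => ?_
    rw [hdot_mid i, hdot_sub i]
    ring
  -- bound on S
  set ε : ℝ := 16 * (d : ℝ) ^ ((5 : ℝ) / 2) * c with hε_def
  have hS_le : S ≤ 4 * ε := by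
    have h1 : L ξ₁ - sInf (L '' 𝔅) ≤ ε := hL₁
    have h2 : L ξ₂ - sInf (L '' 𝔅) ≤ ε := hL₂
    have : S / 2 = L ξ₁ + L ξ₂ - 2 * L m := by linarith
    linarith
  clear_value c m S ε
  -- quadratic form identity
  have hquad : (ξ₁ - ξ₂) ⬝ᵥ Λ *ᵥ (ξ₁ - ξ₂) = (∑ j, (ξ₁ j - ξ₂ j) ^ 2) + S := by
    rw [hΛ, Matrix.add_mulVec, Matrix.one_mulVec, dotProduct_add]
    congr 1
    · simp only [dotProduct, Pi.sub_apply]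
      exact Finset.sum_congr rfl fun j _ => by ring
    · have h : (∑ i, Matrix.vecMulVec (φ i) (φ i)) *ᵥ (ξ₁ - ξ₂)
          = ∑ i, (Matrix.vecMulVec (φ i) (φ i) *ᵥ (ξ₁ - ξ₂)) := by
        funext j
        simp only [Matrix.mulVec, dotProduct, Matrix.sum_apply, Finset.sum_mul,
          Finset.sum_apply]
        rw [Finset.sum_comm]
      rw [h, hS_def]
      simp only [dotProduct, Finset.sum_apply, Finset.mul_sum]
      rw [Finset.sum_comm]
      refine Finset.sum_congr rfl fun i _ => ?_
      have hv : ∀ x, Matrix.vecMulVec (φ i) (φ i) *ᵥ x = (φ i ⬝ᵥ x) • φ i := by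
        intro x
        funext j
        simp only [Matrix.mulVec, dotProduct, Matrix.vecMulVec_apply, Pi.smul_apply,
          smul_eq_mul, Finset.mul_sum]
        rw [Finset.sum_mul]
        exact Finset.sum_congr rfl fun k _ => by ring
      rw [hv]
      simp only [Pi.smul_apply, smul_eq_mul, dotProduct, Pi.sub_apply]
      rw [pow_two, Finset.sum_mul]
      exact Finset.sum_congr rfl fun j _ => by ring
  -- norm difference bound
  have hdiff : (∑ j, (ξ₁ j - ξ₂ j) ^ 2) ≤ 4 * (d : ℝ) := by
    have h : ∀ j : Fin d, (ξ₁ j - ξ₂ j) ^ 2 ≤ 2 * ξ₁ j ^ 2 + 2 * ξ₂ j ^ 2 := by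
      intro j; nlinarith [sq_nonneg (ξ₁ j + ξ₂ j)]
    calc (∑ j, (ξ₁ j - ξ₂ j) ^ 2) ≤ ∑ j, (2 * ξ₁ j ^ 2 + 2 * ξ₂ j ^ 2) :=
          Finset.sum_le_sum fun j _ => h j
      _ = 2 * (∑ j, ξ₁ j ^ 2) + 2 * (∑ j, ξ₂ j ^ 2) := by
          rw [Finset.sum_add_distrib, Finset.mul_sum, Finset.mul_sum]
      _ ≤ 4 * (d : ℝ) := by linarith
  -- power facts
  have hd52 : (d : ℝ) ≤ (d : ℝ) ^ ((5 : ℝ) / 2) := by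
    nth_rewrite 1 [← Real.rpow_one (d : ℝ)]
    exact Real.rpow_le_rpow_of_exponent_le hd1 (by norm_num)
  have hd52_pos : (0 : ℝ) < (d : ℝ) ^ ((5 : ℝ) / 2) := by positivity
  have hsq : ((d : ℝ) ^ ((5 : ℝ) / 4)) ^ 2 = (d : ℝ) ^ ((5 : ℝ) / 2) := by
    rw [← Real.rpow_natCast ((d : ℝ) ^ ((5 : ℝ) / 4)) 2, ← Real.rpow_mul (by positivity)]
    norm_num
  have hmain : (ξ₁ - ξ₂) ⬝ᵥ Λ *ᵥ (ξ₁ - ξ₂) ≤ 100 * (d : ℝ) ^ ((5 : ℝ) / 2) * c := by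
    rw [hquad]
    have hmul : (d : ℝ) ^ ((5 : ℝ) / 2) ≤ (d : ℝ) ^ ((5 : ℝ) / 2) * c :=
      le_mul_of_one_le_right hd52_pos.le hc1
    have h4d : 4 * (d : ℝ) ≤ 4 * ((d : ℝ) ^ ((5 : ℝ) / 2) * c) := by
      linarith [hd52, hmul]
    have hS4 : S ≤ 64 * ((d : ℝ) ^ ((5 : ℝ) / 2) * c) := by
      rw [hε_def] at hS_le; linarith
    linarith [hdiff]
  calc Real.sqrt ((ξ₁ - ξ₂) ⬝ᵥ Λ *ᵥ (ξ₁ - ξ₂))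
      ≤ Real.sqrt ((10 * (d : ℝ) ^ ((5 : ℝ) / 4) * Real.sqrt c) ^ 2) := by
        apply Real.sqrt_le_sqrt
        have : (10 * (d : ℝ) ^ ((5 : ℝ) / 4) * Real.sqrt c) ^ 2
            = 100 * (d : ℝ) ^ ((5 : ℝ) / 2) * c := by
          rw [mul_pow, mul_pow, hsq, Real.sq_sqrt hc0]
          ring
        rw [this]
        exact hmain
    _ = 10 * (d : ℝ) ^ ((5 : ℝ) / 4) * Real.sqrt c := by
        apply Real.sqrt_sq
        positivity
end

section
/- Let d ≥ 1, let G, H ∈ ℝ^{d×d} be symmetric positive definite matrices, and let g, h ∈ ℝ^d. Define the lifted (d+1)×(d+1) matrices 𝐆 = [[G + g gᵀ, g], [gᵀ, 1]] and 𝐇 = [[H + h hᵀ, h], [hᵀ, 1]] (in block form, with top-left block of size d×d). Then 𝐆 and 𝐇 are positive definite and D_F(𝐆, 𝐇) = D_F(G, H) + (g − h)ᵀ H⁻¹ (g − h). -/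
open scoped BigOperators Matrix

open Matrix in
lemma myPosDef_fromBlocks_diag {m n : Type*} [Fintype m] [Fintype n]
    {A : Matrix m m ℝ} {B : Matrix n n ℝ} (hA : A.PosDef) (hB : B.PosDef) :
    (fromBlocks A 0 0 B).PosDef := by
  refine Matrix.PosDef.of_dotProduct_mulVec_pos ?_ ?_
  · unfold Matrix.IsHermitian
    rw [fromBlocks_conjTranspose, hA.1.eq, hB.1.eq]
    simp
  · intro x hx
    rw [fromBlocks_mulVec]
    have hsplit : star x = Sum.elim (star (x ∘ Sum.inl)) (star (x ∘ Sum.inr)) := by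
      ext i; cases i <;> rfl
    rw [hsplit]
    simp only [Matrix.zero_mulVec, add_zero, zero_add, sumElim_dotProduct_sumElim]
    have : x ∘ Sum.inl ≠ 0 ∨ x ∘ Sum.inr ≠ 0 := by
      by_contra hc
      push_neg at hc
      apply hx
      ext i
      cases i with
      | inl i => exact congrFun hc.1 i
      | inr i => exact congrFun hc.2 i
    rcases this with h1 | h1
    · exact add_pos_of_pos_of_nonneg (hA.dotProduct_mulVec_pos h1) (hB.posSemidef.dotProduct_mulVec_nonneg _)
    · exact add_pos_of_nonneg_of_pos (hA.posSemidef.dotProduct_mulVec_nonneg _) (hB.dotProduct_mulVec_pos h1)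

open Matrix in
lemma myPosDef_conj {n : Type*} [Fintype n] [DecidableEq n]
    {A : Matrix n n ℝ} (hA : A.PosDef) (M : Matrix n n ℝ) (hM : IsUnit M) :
    (Mᴴ * A * M).PosDef := by
  refine Matrix.PosDef.of_dotProduct_mulVec_pos ?_ ?_
  · exact isHermitian_conjTranspose_mul_mul M hA.1
  · intro x hx
    have hinj : Function.Injective M.mulVec := mulVec_injective_iff_isUnit.2 hM
    have hMx : M *ᵥ x ≠ 0 := fun hz => hx (hinj (by rw [Matrix.mulVec_zero]; exact hz))
    simpa only [star_mulVec, dotProduct_mulVec, vecMul_vecMul] using hA.dotProduct_mulVec_pos hMx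

open Matrix in
lemma myTrace_fromBlocks {m n : Type*} [Fintype m] [Fintype n]
    (A : Matrix m m ℝ) (B : Matrix m n ℝ) (C : Matrix n m ℝ) (D : Matrix n n ℝ) :
    (fromBlocks A B C D).trace = A.trace + D.trace := by
  simp [Matrix.trace, Fintype.sum_sum_type, Matrix.diag]

open Matrix in
lemma myLift_eq {d : ℕ} (A : Matrix (Fin d) (Fin d) ℝ) (v : Fin d → ℝ) :
    Matrix.fromBlocks (A + Matrix.vecMulVec v v)
      (Matrix.of fun i (_ : Unit) => v i) (Matrix.of fun (_ : Unit) j => v j) 1 =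
    (Matrix.fromBlocks 1 0 (Matrix.replicateRow Unit v) 1)ᴴ *
      Matrix.fromBlocks A 0 0 1 * (Matrix.fromBlocks 1 0 (Matrix.replicateRow Unit v) 1) := by
  rw [fromBlocks_conjTranspose, fromBlocks_multiply, fromBlocks_multiply]
  ext i j
  rcases i with i | i <;> rcases j with j | j <;>
    simp [Matrix.vecMulVec_eq Unit, Matrix.mul_apply, Matrix.replicateRow, Matrix.replicateCol, Matrix.vecMulVec]

open Matrix in
lemma myM_isUnit {d : ℕ} (v : Fin d → ℝ) :
    IsUnit (Matrix.fromBlocks (1 : Matrix (Fin d) (Fin d) ℝ)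
      (0 : Matrix (Fin d) Unit ℝ) (Matrix.replicateRow Unit v) (1 : Matrix Unit Unit ℝ)) := by
  rw [Matrix.isUnit_iff_isUnit_det, Matrix.det_fromBlocks_one₂₂]
  simp

open Matrix in
lemma myLift_posDef {d : ℕ} {A : Matrix (Fin d) (Fin d) ℝ} (hA : A.PosDef) (v : Fin d → ℝ) :
    (Matrix.fromBlocks (A + Matrix.vecMulVec v v)
      (Matrix.of fun i (_ : Unit) => v i) (Matrix.of fun (_ : Unit) j => v j) 1).PosDef := by
  rw [myLift_eq]
  exact myPosDef_conj (myPosDef_fromBlocks_diag hA Matrix.PosDef.one) _ (myM_isUnit v)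

open Matrix in
lemma myLift_det {d : ℕ} (A : Matrix (Fin d) (Fin d) ℝ) (v : Fin d → ℝ) :
    (Matrix.fromBlocks (A + Matrix.vecMulVec v v)
      (Matrix.of fun i (_ : Unit) => v i) (Matrix.of fun (_ : Unit) j => v j) 1).det = A.det := by
  rw [Matrix.det_fromBlocks_one₂₂]
  congr 1
  have h1 : (Matrix.of fun i (_ : Unit) => v i) = Matrix.replicateCol Unit v := rfl
  have h2 : (Matrix.of fun (_ : Unit) j => v j) = Matrix.replicateRow Unit v := rfl
  rw [h1, h2, ← Matrix.vecMulVec_eq Unit, add_sub_cancel_right]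

theorem stmt8 {d : ℕ} (hd : 1 ≤ d) (G H : Matrix (Fin d) (Fin d) ℝ)
    (hG : G.PosDef) (hH : H.PosDef) (g h : Fin d → ℝ)
    (Glift Hlift : Matrix (Fin d ⊕ Unit) (Fin d ⊕ Unit) ℝ)
    (hGlift : Glift = Matrix.fromBlocks (G + Matrix.vecMulVec g g)
      (Matrix.of fun i (_ : Unit) => g i) (Matrix.of fun (_ : Unit) j => g j) 1)
    (hHlift : Hlift = Matrix.fromBlocks (H + Matrix.vecMulVec h h)
      (Matrix.of fun i (_ : Unit) => h i) (Matrix.of fun (_ : Unit) j => h j) 1) :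
    Glift.PosDef ∧ Hlift.PosDef ∧
      logDetBreg Glift Hlift = logDetBreg G H + (g - h) ⬝ᵥ H⁻¹ *ᵥ (g - h) := by
  subst hGlift hHlift
  refine ⟨myLift_posDef hG g, myLift_posDef hH h, ?_⟩
  have hdet : IsUnit H.det := (Matrix.isUnit_iff_isUnit_det H).mp hH.isUnit
  have hsym : (H⁻¹)ᵀ = H⁻¹ := by
    simpa [Matrix.conjTranspose_eq_transpose_of_trivial] using hH.1.inv.eq
  have hvm : ∀ v : Fin d → ℝ, v ᵥ* H⁻¹ = H⁻¹ *ᵥ v := fun v => by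
    rw [← hsym, Matrix.vecMul_transpose, hsym]
  have hHh : H *ᵥ (H⁻¹ *ᵥ h) = h := by
    rw [Matrix.mulVec_mulVec, Matrix.mul_nonsing_inv _ hdet, Matrix.one_mulVec]
  set w : Fin d → ℝ := H⁻¹ *ᵥ h with hw
  set K : Matrix (Fin d ⊕ Unit) (Fin d ⊕ Unit) ℝ :=
    Matrix.fromBlocks H⁻¹ (Matrix.replicateCol Unit (-w)) (Matrix.replicateRow Unit (-w))
      (Matrix.of fun _ _ => 1 + h ⬝ᵥ w) with hK
  have h1 : (Matrix.of fun i (_ : Unit) => h i) = Matrix.replicateCol Unit h := rfl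
  have h2 : (Matrix.of fun (_ : Unit) j => h j) = Matrix.replicateRow Unit h := rfl
  have g1 : (Matrix.of fun i (_ : Unit) => g i) = Matrix.replicateCol Unit g := rfl
  have g2 : (Matrix.of fun (_ : Unit) j => g j) = Matrix.replicateRow Unit g := rfl
  have hrowneg : Matrix.replicateRow Unit (-w) = -Matrix.replicateRow Unit w := by
    ext i j; simp [Matrix.replicateRow]
  have hcolneg : Matrix.replicateCol Unit (-w) = -Matrix.replicateCol Unit w := by
    ext i j; simp [Matrix.replicateCol]
  have TL : (H + Matrix.vecMulVec h h) * H⁻¹ + Matrix.replicateCol Unit h * Matrix.replicateRow Unit (-w) = 1 := by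
    rw [add_mul, Matrix.mul_nonsing_inv _ hdet, Matrix.vecMulVec_eq Unit, Matrix.mul_assoc,
      ← Matrix.replicateRow_vecMul, hvm, hrowneg, Matrix.mul_neg, add_assoc, add_neg_cancel, add_zero]
  have hscal : (Matrix.of fun (_ _ : Unit) => 1 + h ⬝ᵥ w) = (1 + h ⬝ᵥ w) • (1 : Matrix Unit Unit ℝ) := by
    ext i j; simp [Matrix.one_apply]
  have TR : (H + Matrix.vecMulVec h h) * Matrix.replicateCol Unit (-w) +
      Matrix.replicateCol Unit h * (Matrix.of fun (_ _ : Unit) => 1 + h ⬝ᵥ w) = 0 := by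
    rw [Matrix.add_mul, ← Matrix.replicateCol_mulVec, Matrix.mulVec_neg, hHh,
      Matrix.vecMulVec_eq Unit, Matrix.mul_assoc, Matrix.replicateRow_mul_replicateCol, hscal]
    have e1 : (Matrix.of fun (_ _ : Unit) => h ⬝ᵥ (-w)) = (-(h ⬝ᵥ w)) • (1 : Matrix Unit Unit ℝ) := by
      ext i j; simp [Matrix.one_apply, dotProduct_neg]
    have e2 : Matrix.replicateCol Unit (-h) = -Matrix.replicateCol Unit h := by ext i j; simp [Matrix.replicateCol]
    rw [e1, e2, Matrix.mul_smul, Matrix.mul_one, Matrix.mul_smul, Matrix.mul_one, add_smul, one_smul]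
    module
  have BL : Matrix.replicateRow Unit h * H⁻¹ + (1 : Matrix Unit Unit ℝ) * Matrix.replicateRow Unit (-w) = 0 := by
    rw [Matrix.one_mul, ← Matrix.replicateRow_vecMul, hvm, hrowneg, add_neg_cancel]
  have BR : Matrix.replicateRow Unit h * Matrix.replicateCol Unit (-w) +
      (1 : Matrix Unit Unit ℝ) * (Matrix.of fun (_ _ : Unit) => 1 + h ⬝ᵥ w) = 1 := by
    rw [Matrix.one_mul, Matrix.replicateRow_mul_replicateCol]
    ext i j
    simp [Matrix.one_apply, dotProduct]
  have hHK : (Matrix.fromBlocks (H + Matrix.vecMulVec h h)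
      (Matrix.of fun i (_ : Unit) => h i) (Matrix.of fun (_ : Unit) j => h j) 1) * K = 1 := by
    rw [hK, h1, h2, Matrix.fromBlocks_multiply, TL, TR, BL, BR, Matrix.fromBlocks_one]
  have hKinv : (Matrix.fromBlocks (H + Matrix.vecMulVec h h)
      (Matrix.of fun i (_ : Unit) => h i) (Matrix.of fun (_ : Unit) j => h j) 1)⁻¹ = K :=
    Matrix.inv_eq_right_inv hHK
  have hKH : K * (Matrix.fromBlocks (H + Matrix.vecMulVec h h)
      (Matrix.of fun i (_ : Unit) => h i) (Matrix.of fun (_ : Unit) j => h j) 1) = 1 :=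
    mul_eq_one_comm.mp hHK
  -- trace of K * Glift
  have hcross : g ⬝ᵥ (H⁻¹ *ᵥ h) = h ⬝ᵥ (H⁻¹ *ᵥ g) := by
    rw [Matrix.dotProduct_mulVec, hvm, dotProduct_comm]
  have htraceKG : (K * (Matrix.fromBlocks (G + Matrix.vecMulVec g g)
      (Matrix.of fun i (_ : Unit) => g i) (Matrix.of fun (_ : Unit) j => g j) 1)).trace =
      (H⁻¹ * G).trace + g ⬝ᵥ (H⁻¹ *ᵥ g) - w ⬝ᵥ g + (-(w ⬝ᵥ g) + (1 + h ⬝ᵥ w)) := by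
    rw [hK, g1, g2, Matrix.fromBlocks_multiply, myTrace_fromBlocks]
    have t1 : (H⁻¹ * (G + Matrix.vecMulVec g g) + Matrix.replicateCol Unit (-w) * Matrix.replicateRow Unit g).trace =
        (H⁻¹ * G).trace + g ⬝ᵥ (H⁻¹ *ᵥ g) - w ⬝ᵥ g := by
      rw [Matrix.mul_add, Matrix.trace_add, Matrix.trace_add, Matrix.trace_replicateCol_mul_replicateRow,
        neg_dotProduct]
      have e : (H⁻¹ * Matrix.vecMulVec g g).trace = g ⬝ᵥ (H⁻¹ *ᵥ g) := by
        rw [Matrix.vecMulVec_eq Unit, ← Matrix.mul_assoc, Matrix.trace_mul_comm,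
          ← Matrix.replicateCol_mulVec, Matrix.replicateRow_mul_replicateCol]
        simp [Matrix.trace, Matrix.diag]
      rw [e]
      ring
    have t2 : (Matrix.replicateRow Unit (-w) * Matrix.replicateCol Unit g +
        (Matrix.of fun (_ _ : Unit) => 1 + h ⬝ᵥ w) * (1 : Matrix Unit Unit ℝ)).trace =
        -(w ⬝ᵥ g) + (1 + h ⬝ᵥ w) := by
      rw [Matrix.mul_one, Matrix.replicateRow_mul_replicateCol]
      simp [Matrix.trace, Matrix.diag, neg_dotProduct]
    rw [t1, t2]
  unfold logDetBreg
  rw [myLift_det G g, myLift_det H h, hKinv, Matrix.mul_sub, Matrix.trace_sub, hKH,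
    htraceKG, Matrix.trace_one, Matrix.mul_sub, Matrix.trace_sub,
    Matrix.nonsing_inv_mul _ hdet, Matrix.trace_one,
    Matrix.mulVec_sub, dotProduct_sub, sub_dotProduct, sub_dotProduct]
  have hb : w ⬝ᵥ g = h ⬝ᵥ (H⁻¹ *ᵥ g) := by
    rw [dotProduct_comm, hw, hcross]
  have hc : h ⬝ᵥ w = h ⬝ᵥ (H⁻¹ *ᵥ h) := rfl
  rw [hb, hc, hcross]
  simp only [Fintype.card_sum, Fintype.card_fin, Fintype.card_unit, Nat.cast_add, Nat.cast_one]
  ring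
end

section
/- Consider a finite-horizon layered MDP: a horizon H ≥ 1; finite disjoint state layers S_1, …, S_H; a finite action set 𝒜; and for each h < H, s ∈ S_h, a ∈ 𝒜 a probability distribution P(·|s,a) on S_{h+1}. Let π be a policy, let r be a nonnegative function on state-action pairs, and let B be a real-valued function on state-action pairs satisfying: B(s,a) ≤ r(s,a) for all s ∈ S_H and a ∈ 𝒜; and B(s,a) ≤ r(s,a) + (1 + 1/H) ∑_{s' ∈ S_{h+1}} P(s'|s,a) ∑_{a'} π(a'|s') B(s',a') for all h < H, s ∈ S_h, a ∈ 𝒜. Then for every h ∈ {1,…,H} and every s ∈ S_h: ∑_a π(a|s) B(s,a) ≤ (1 + 1/H)^{H−h} · V^π(s; r). -/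
open scoped BigOperators

/-- The Q-function of a layered finite-horizon MDP, defined by backward recursion.
`Qlayer H S P π r t s a` is the Q-value at a state `s` of layer `h = H - t`
(`t` is the number of remaining transitions): for `t = 0` (the last layer `H`)
it equals `r s a`, and otherwise
`Q (s, a) = r s a + ∑_{s' ∈ S (h+1)} P s a s' * ∑_{a'} π s' a' * Q (s', a')`. -/
noncomputable def Qlayer {𝒮 𝒜 : Type*} [Fintype 𝒜] (H : ℕ) (S : ℕ → Finset 𝒮)
    (P : 𝒮 → 𝒜 → 𝒮 → ℝ) (π : 𝒮 → 𝒜 → ℝ) (r : 𝒮 → 𝒜 → ℝ) : ℕ → 𝒮 → 𝒜 → ℝ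
  | 0, s, a => r s a
  | t + 1, s, a =>
      r s a + ∑ s' ∈ S (H - t), P s a s' * ∑ a' : 𝒜, π s' a' * Qlayer H S P π r t s' a'

theorem stmt11 {𝒮 𝒜 : Type*} [Fintype 𝒜] (H : ℕ) (hH : 1 ≤ H)
    (S : ℕ → Finset 𝒮)
    (hdisj : ∀ h h' : ℕ, 1 ≤ h → h < h' → h' ≤ H → Disjoint (S h) (S h'))
    (P : 𝒮 → 𝒜 → 𝒮 → ℝ)
    (hPnonneg : ∀ h : ℕ, 1 ≤ h → h < H → ∀ s ∈ S h, ∀ a : 𝒜,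
      ∀ s' ∈ S (h + 1), 0 ≤ P s a s')
    (hPsum : ∀ h : ℕ, 1 ≤ h → h < H → ∀ s ∈ S h, ∀ a : 𝒜,
      ∑ s' ∈ S (h + 1), P s a s' = 1)
    (π : 𝒮 → 𝒜 → ℝ) (hπnonneg : ∀ s a, 0 ≤ π s a)
    (hπsum : ∀ s, ∑ a : 𝒜, π s a = 1)
    (r : 𝒮 → 𝒜 → ℝ) (hr : ∀ s a, 0 ≤ r s a)
    (B : 𝒮 → 𝒜 → ℝ)
    (hBlast : ∀ s ∈ S H, ∀ a : 𝒜, B s a ≤ r s a)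
    (hBrec : ∀ h : ℕ, 1 ≤ h → h < H → ∀ s ∈ S h, ∀ a : 𝒜,
      B s a ≤ r s a + (1 + 1 / (H : ℝ)) *
        ∑ s' ∈ S (h + 1), P s a s' * ∑ a' : 𝒜, π s' a' * B s' a') :
    ∀ h : ℕ, 1 ≤ h → h ≤ H → ∀ s ∈ S h,
      ∑ a : 𝒜, π s a * B s a ≤
        (1 + 1 / (H : ℝ)) ^ (H - h) *
          ∑ a : 𝒜, π s a * Qlayer H S P π r (H - h) s a := by
  have hHpos : (0:ℝ) < H := by exact_mod_cast Nat.lt_of_lt_of_le Nat.zero_lt_one hH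
  set c : ℝ := 1 + 1 / H with hcdef
  have hc1 : 1 ≤ c := le_add_of_nonneg_right (by positivity)
  have hc0 : 0 ≤ c := le_trans zero_le_one hc1
  suffices key : ∀ t h : ℕ, h + t = H → 1 ≤ h → ∀ s ∈ S h,
      ∑ a : 𝒜, π s a * B s a ≤ c ^ t * ∑ a : 𝒜, π s a * Qlayer H S P π r t s a by
    intro h h1 hle s hs
    exact key (H - h) h (by omega) h1 s hs
  intro t
  induction t with
  | zero =>
    intro h hht h1 s hs
    have hhH : h = H := by omega
    subst hhH
    simp only [pow_zero, one_mul, Qlayer]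
    refine Finset.sum_le_sum fun a _ => ?_
    exact mul_le_mul_of_nonneg_left (hBlast s hs a) (hπnonneg s a)
  | succ t ih =>
    intro h hht h1 s hs
    have hhH : h < H := by omega
    have hS : H - t = h + 1 := by omega
    have hIH : ∀ s' ∈ S (h+1), ∑ a' : 𝒜, π s' a' * B s' a' ≤
        c ^ t * ∑ a' : 𝒜, π s' a' * Qlayer H S P π r t s' a' :=
      fun s' hs' => ih (h+1) (by omega) (by omega) s' hs'
    set X : 𝒮 → ℝ := fun s' => ∑ a' : 𝒜, π s' a' * Qlayer H S P π r t s' a' with hX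
    have hstep1 : ∑ a : 𝒜, π s a * B s a ≤
        ∑ a : 𝒜, π s a * (r s a + c * ∑ s' ∈ S (h+1), P s a s' * (c ^ t * X s')) := by
      refine Finset.sum_le_sum fun a _ => ?_
      refine mul_le_mul_of_nonneg_left ?_ (hπnonneg s a)
      refine le_trans (hBrec h h1 hhH s hs a) ?_
      refine add_le_add_right (mul_le_mul_of_nonneg_left ?_ hc0) _
      refine Finset.sum_le_sum fun s' hs' => ?_
      exact mul_le_mul_of_nonneg_left (hIH s' hs') (hPnonneg h h1 hhH s hs a s' hs')
    have hexpand : ∀ a : 𝒜, π s a * (r s a + c * ∑ s' ∈ S (h+1), P s a s' * (c ^ t * X s'))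
        = π s a * r s a + c ^ (t+1) * (π s a * ∑ s' ∈ S (h+1), P s a s' * X s') := by
      intro a
      simp only [Finset.mul_sum, mul_add]
      congr 1
      exact Finset.sum_congr rfl fun s' _ => by ring
    have hsum : ∑ a : 𝒜, π s a * (r s a + c * ∑ s' ∈ S (h+1), P s a s' * (c ^ t * X s'))
        = (∑ a : 𝒜, π s a * r s a)
          + c ^ (t+1) * ∑ a : 𝒜, π s a * ∑ s' ∈ S (h+1), P s a s' * X s' := by
      simp only [hexpand]
      rw [Finset.sum_add_distrib, Finset.mul_sum]
    have hrnn : 0 ≤ ∑ a : 𝒜, π s a * r s a :=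
      Finset.sum_nonneg fun a _ => mul_nonneg (hπnonneg s a) (hr s a)
    have hcpow : 1 ≤ c ^ (t+1) := one_le_pow₀ hc1
    have hQ : ∀ a : 𝒜, Qlayer H S P π r (t+1) s a
        = r s a + ∑ s' ∈ S (h+1), P s a s' * X s' := by
      intro a
      show r s a + ∑ s' ∈ S (H - t), P s a s' * X s' = _
      rw [hS]
    calc ∑ a : 𝒜, π s a * B s a
        ≤ (∑ a : 𝒜, π s a * r s a)
          + c ^ (t+1) * ∑ a : 𝒜, π s a * ∑ s' ∈ S (h+1), P s a s' * X s' := by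
          rw [← hsum]; exact hstep1
      _ ≤ c ^ (t+1) * ((∑ a : 𝒜, π s a * r s a)
          + ∑ a : 𝒜, π s a * ∑ s' ∈ S (h+1), P s a s' * X s') := by
          rw [mul_add]
          exact add_le_add_left (le_mul_of_one_le_left hrnn hcpow) _
      _ = c ^ (t+1) * ∑ a : 𝒜, π s a * Qlayer H S P π r (t+1) s a := by
          congr 1
          rw [← Finset.sum_add_distrib]
          refine Finset.sum_congr rfl fun a _ => ?_
          rw [hQ a, mul_add]
end
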